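/- For every k-tree G on n vertices with G not isomorphic to Q_n^k, tw(G) + tw(complement of G) = n − 2. -/

import Mathlib

open SimpleGraph

/-- A tree decomposition of a graph `G`. -/
structure TreeDecomp {V : Type} (G : SimpleGraph V) where
  ι : Type
  T : SimpleGraph ι
  conn : T.Connected
  acyclic : T.IsAcyclic
  bag : ι → Finset V
  cover : ∀ v : V, ∃ i, v ∈ bag i
  edge_cover : ∀ ⦃u v : V⦄, G.Adj u v → ∃ i, u ∈ bag i ∧ v ∈ bag i
  bag_conn : ∀ v : V, (T.induce {i | v ∈ bag i}).Connected

/-- The treewidth of `G`: minimum over tree decompositions of max bag size minus one. -/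
noncomputable def treewidth {V : Type} (G : SimpleGraph V) : ℕ :=
  sInf {k | ∃ D : TreeDecomp G, ∀ i, (D.bag i).card ≤ k + 1}

/-- `G` is a `k`-tree: there is a construction ordering starting from a `(k+1)`-clique,
each later vertex being adjacent exactly to a `k`-clique of earlier vertices. -/
def IsKTree {V : Type} (k : ℕ) (G : SimpleGraph V) : Prop :=
  ∃ (n : ℕ) (e : V ≃ Fin n), k + 1 ≤ n ∧
    (∀ i j : Fin n, i < j → (j : ℕ) < k + 1 → G.Adj (e.symm i) (e.symm j)) ∧
    ∀ j : Fin n, k + 1 ≤ (j : ℕ) →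
      ∃ C : Finset V, G.IsNClique k C ∧ (∀ x ∈ C, ((e x : ℕ) < (j : ℕ))) ∧
        ∀ i : Fin n, i < j → (G.Adj (e.symm i) (e.symm j) ↔ e.symm i ∈ C)

/-- `G` has four vertices inducing a 4-cycle. -/
def HasInducedC4 {V : Type} (G : SimpleGraph V) : Prop :=
  ∃ a b c d : V, a ≠ c ∧ b ≠ d ∧
    G.Adj a b ∧ G.Adj b c ∧ G.Adj c d ∧ G.Adj d a ∧ ¬ G.Adj a c ∧ ¬ G.Adj b d

/-- Two vertex sets touch in `G`: they intersect or an edge of `G` joins them. -/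
def Touch {V : Type} (G : SimpleGraph V) (A B : Set V) : Prop :=
  (A ∩ B).Nonempty ∨ ∃ a ∈ A, ∃ b ∈ B, G.Adj a b

/-- A bramble in `G`: a family of connected, pairwise touching vertex sets. -/
def IsBramble {V : Type} (G : SimpleGraph V) (𝓑 : Set (Set V)) : Prop :=
  (∀ A ∈ 𝓑, (G.induce A).Connected) ∧ ∀ A ∈ 𝓑, ∀ B ∈ 𝓑, Touch G A B

/-- `S` is a hitting set of the bramble `𝓑`. -/
def IsHittingSet {V : Type} (𝓑 : Set (Set V)) (S : Set V) : Prop :=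
  ∀ A ∈ 𝓑, (A ∩ S).Nonempty

/-- The split graph `Q_n^k`: a `k`-clique (the vertices `< k`) with `n - k` further
vertices adjacent exactly to the clique. -/
def QGraph (n k : ℕ) : SimpleGraph (Fin n) where
  Adj i j := i ≠ j ∧ ((i : ℕ) < k ∨ (j : ℕ) < k)
  symm := ⟨by intro i j h; exact ⟨h.1.symm, h.2.symm⟩⟩
  loopless := ⟨by intro i h; exact h.1 rfl⟩

/-!
The construction order of a `k`-tree is a perfect elimination order: the earlier neighbours of
every vertex form a clique of at most `k` vertices. Taking each vertex with its earlier
neighbours as a bag gives `tw G ≤ k`, and the initial `(k + 1)`-clique, which some bag must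
contain, gives `tw G ≥ k`. The same order shows that cliques have at most `k + 1` vertices and
that `G` has no induced 4-cycle, so the non-edges of `G` pairwise touch in `Gᶜ`: they form a
bramble of `Gᶜ`, and a bag hitting all of them leaves out a clique of `G`, whence
`tw Gᶜ ≥ n - k - 2`.

If `G` is not `Q_n^k`, following the construction until a vertex attaches to a clique other than
the first one produces a `(k + 1)`-clique `B` and two vertices `w ≠ u` outside it adjacent to all
of `B` except `d` and `x ≠ d` respectively. With `R = V \ (B ∪ {w, u})`, the bags
`R ∪ {d, w}`, `R ∪ {w, u}`, `R ∪ {u, x}` and `R ∪ {z}` for `z ∈ B \ {d, x}` form a path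
decomposition of `Gᶜ` of width `n - k - 2`.
-/

open Finset

namespace SimpleGraph

section Subtrees

variable {ι : Type*} {T : SimpleGraph ι}

lemma Walk.mem_support_map_induce {S : Set ι} {a b : S} (w : (T.induce S).Walk a b) :
    ∀ x ∈ (w.map (Embedding.induce S).toHom).support, x ∈ S := by
  intro x hx
  rw [Walk.support_map, List.mem_map] at hx
  obtain ⟨y, -, rfl⟩ := hx
  exact y.2

lemma exists_isPath_of_connected_induce {S : Set ι} (hS : (T.induce S).Connected) {a b : ι}
    (ha : a ∈ S) (hb : b ∈ S) :
    ∃ p : T.Walk a b, p.IsPath ∧ ∀ x ∈ p.support, x ∈ S := by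
  classical
  obtain ⟨q⟩ := hS.preconnected ⟨a, ha⟩ ⟨b, hb⟩
  exact ⟨_, Walk.bypass_isPath _, fun x hx =>
    q.mem_support_map_induce x (Walk.support_bypass_subset_support _ hx)⟩

lemma IsAcyclic.support_subset_of_isPath (hT : T.IsAcyclic) {S : Set ι}
    (hS : (T.induce S).Connected) {a b : ι} (ha : a ∈ S) (hb : b ∈ S) {p : T.Walk a b}
    (hp : p.IsPath) : ∀ x ∈ p.support, x ∈ S := by
  obtain ⟨q, hq, hqS⟩ := exists_isPath_of_connected_induce hS ha hb
  obtain rfl : p = q :=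
    congrArg Subtype.val ((hT.subsingleton_path a b).elim ⟨p, hp⟩ ⟨q, hq⟩)
  exact hqS

lemma IsAcyclic.induce_inter_connected (hT : T.IsAcyclic) {A B : Set ι}
    (hA : (T.induce A).Connected) (hB : (T.induce B).Connected) (hAB : (A ∩ B).Nonempty) :
    (T.induce (A ∩ B)).Connected := by
  rw [connected_iff]
  refine ⟨fun x y => ?_, hAB.to_subtype⟩
  obtain ⟨p, hp, hpA⟩ := exists_isPath_of_connected_induce hA x.2.1 y.2.1
  have hpB := hT.support_subset_of_isPath hB x.2.2 y.2.2 hp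
  exact ⟨p.induce (A ∩ B) fun z hz => ⟨hpA z hz, hpB z hz⟩⟩

lemma Walk.exists_walk_first_mem {S : Set ι} {r q : ι} (w : T.Walk r q) (hq : q ∈ S) :
    ∃ m ∈ S, ∃ w₁ : T.Walk r m,
      w₁.support ⊆ w.support ∧ ∀ x ∈ w₁.support, x ∈ S → x = m := by
  induction w with
  | nil => exact ⟨_, hq, .nil, by simp, by simp⟩
  | @cons r r' q h w ih =>
    by_cases hr : r ∈ S
    · exact ⟨r, hr, .nil, by simp, by simp⟩
    obtain ⟨m, hm, w₁, hsub, hfirst⟩ := ih hq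
    refine ⟨m, hm, .cons h w₁, by simpa using List.cons_subset_cons r hsub, ?_⟩
    rintro x hx hxS
    rcases List.mem_cons.mp hx with rfl | hx
    · exact absurd hxS hr
    · exact hfirst x hx hxS

lemma Walk.IsPath.append_of_support_inter {a m b : ι} {p : T.Walk a m} {q : T.Walk m b}
    (hp : p.IsPath) (hq : q.IsPath) (h : ∀ x ∈ p.support, x ∈ q.support → x = m) :
    (p.append q).IsPath := by
  rw [Walk.isPath_def, Walk.support_append]
  have hq' : (m :: q.support.tail).Nodup := q.cons_tail_support ▸ hq.support_nodup
  refine hp.support_nodup.append (List.nodup_cons.mp hq').2 fun x hxp hxq => ?_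
  obtain rfl := h x hxp (q.cons_tail_support ▸ List.mem_cons_of_mem _ hxq)
  exact (List.nodup_cons.mp hq').1 hxq

/-- The first vertex `m ∈ B` on a path from `r ∈ A ∩ C` to `p ∈ A ∩ B` lies on the path
from `r` to `q ∈ B ∩ C` that runs to `m` and then inside `B`; so `m ∈ A ∩ B ∩ C`. -/
lemma IsAcyclic.inter_inter_nonempty (hT : T.IsAcyclic) {A B C : Set ι}
    (hA : (T.induce A).Connected) (hB : (T.induce B).Connected) (hC : (T.induce C).Connected)
    (hAB : (A ∩ B).Nonempty) (hBC : (B ∩ C).Nonempty) (hAC : (A ∩ C).Nonempty) :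
    (A ∩ B ∩ C).Nonempty := by
  classical
  obtain ⟨p, hpA, hpB⟩ := hAB
  obtain ⟨q, hqB, hqC⟩ := hBC
  obtain ⟨r, hrA, hrC⟩ := hAC
  obtain ⟨P, -, hPA⟩ := exists_isPath_of_connected_induce hA hrA hpA
  obtain ⟨m, hmB, P₁, hP₁P, hP₁B⟩ := P.exists_walk_first_mem hpB
  obtain ⟨Q, hQ, hQB⟩ := exists_isPath_of_connected_induce hB hmB hqB
  have hpath : (P₁.bypass.append Q).IsPath :=
    (Walk.bypass_isPath _).append_of_support_inter hQ fun x hx hxQ =>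
      hP₁B x (P₁.support_bypass_subset_support hx) (hQB x hxQ)
  refine ⟨m, ⟨hPA m (hP₁P P₁.end_mem_support), hmB⟩, ?_⟩
  exact hT.support_subset_of_isPath hC hrC hqC hpath m
    ((Walk.mem_support_append_iff _ _).mpr (Or.inl P₁.bypass.end_mem_support))

/-- The Helly property of subtrees, relative to a subtree `C` so that the induction can shrink
`C`. -/
lemma IsAcyclic.exists_mem_forall_mem (hT : T.IsAcyclic) (F : Finset (Set ι))
    (hF : ∀ A ∈ F, (T.induce A).Connected)
    (hpair : ∀ A ∈ F, ∀ B ∈ F, (A ∩ B).Nonempty)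
    {C : Set ι} (hC : (T.induce C).Connected) (hCF : ∀ A ∈ F, (C ∩ A).Nonempty) :
    ∃ x ∈ C, ∀ A ∈ F, x ∈ A := by
  classical
  induction F using Finset.induction_on generalizing C with
  | empty =>
    obtain ⟨⟨x, hx⟩⟩ := hC.nonempty
    exact ⟨x, hx, by simp⟩
  | insert A F _ ih =>
    have hA := hF A (mem_insert_self A F)
    obtain ⟨x, ⟨hxC, hxA⟩, hxF⟩ := ih (fun B hB => hF B (mem_insert_of_mem hB))
      (fun B hB B' hB' => hpair B (mem_insert_of_mem hB) B' (mem_insert_of_mem hB'))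
      (hT.induce_inter_connected hC hA (hCF A (mem_insert_self A F))) fun B hB =>
        hT.inter_inter_nonempty hC hA (hF B (mem_insert_of_mem hB))
          (hCF A (mem_insert_self A F)) (hpair A (mem_insert_self A F) B (mem_insert_of_mem hB))
          (hCF B (mem_insert_of_mem hB))
    exact ⟨x, hxC, forall_mem_insert _ _ _ |>.mpr ⟨hxA, hxF⟩⟩

lemma induce_iUnion_connected {β : Type*} {H : SimpleGraph β} (hH : H.Connected)
    {S : β → Set ι} (hS : ∀ b, (T.induce (S b)).Connected)
    (hadj : ∀ a b, H.Adj a b → (S a ∩ S b).Nonempty) : (T.induce (⋃ b, S b)).Connected := by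
  have reach : ∀ a b (_ : H.Walk a b) x (hx : x ∈ S a) y (hy : y ∈ S b),
      (T.induce (⋃ b, S b)).Reachable ⟨x, Set.mem_iUnion_of_mem a hx⟩
        ⟨y, Set.mem_iUnion_of_mem b hy⟩ := by
    intro a b w
    induction w with
    | nil =>
      exact fun x hx y hy => ((hS _).preconnected ⟨x, hx⟩ ⟨y, hy⟩).map
        (induceHomOfLE T (Set.subset_iUnion S _)).toHom
    | cons hac _ ih =>
      intro x hx y hy
      obtain ⟨z, hza, hzc⟩ := hadj _ _ hac
      exact (((hS _).preconnected ⟨x, hx⟩ ⟨z, hza⟩).map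
        (induceHomOfLE T (Set.subset_iUnion S _)).toHom).trans (ih z hzc y hy)
  obtain ⟨b⟩ := hH.nonempty
  obtain ⟨⟨x, hx⟩⟩ := (hS b).nonempty
  rw [connected_iff]
  refine ⟨fun ⟨y, hy⟩ ⟨z, hz⟩ => ?_, ⟨⟨x, Set.mem_iUnion_of_mem b hx⟩⟩⟩
  obtain ⟨a, hya⟩ := Set.mem_iUnion.mp hy
  obtain ⟨c, hzc⟩ := Set.mem_iUnion.mp hz
  exact reach a c (hH.preconnected a c).some y hya z hzc

end Subtrees

section ParentGraph

variable {α : Type*} [LinearOrder α] {p : α → α} {a b : α}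

def parentGraph (p : α → α) : SimpleGraph α := fromRel fun a b => b < a ∧ p a = b

lemma parentGraph_adj :
    (parentGraph p).Adj a b ↔ (b < a ∧ p a = b) ∨ (a < b ∧ p b = a) := by
  rw [parentGraph, fromRel_adj, and_iff_right_iff_imp]
  rintro (⟨h, -⟩ | ⟨h, -⟩)
  · exact h.ne'
  · exact h.ne

lemma parentGraph_adj_parent (h : p a < a) : (parentGraph p).Adj a (p a) :=
  parentGraph_adj.mpr (Or.inl ⟨h, rfl⟩)

lemma eq_parent_of_parentGraph_adj (h : (parentGraph p).Adj a b) (hb : b < a) : b = p a := by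
  rcases parentGraph_adj.mp h with ⟨-, rfl⟩ | ⟨hab, -⟩
  · rfl
  · exact absurd hab hb.not_gt

/-- A cycle through its largest vertex `u` would give `u` two distinct smaller neighbours, but
its only smaller neighbour is `p u`. -/
lemma isAcyclic_parentGraph (p : α → α) : (parentGraph p).IsAcyclic := by
  classical
  intro v c hc
  obtain ⟨u, hu, hmax⟩ := c.support.toFinset.exists_max_image id ⟨v, by simp⟩
  rw [List.mem_toFinset] at hu
  set c' := c.rotate u hu
  have hc' : c'.IsCycle := hc.rotate hu
  have lower : ∀ x ∈ c'.support, (parentGraph p).Adj u x → x = p u := fun x hx hux =>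
    eq_parent_of_parentGraph_adj hux <| lt_of_le_of_ne
      (hmax x (List.mem_toFinset.mpr ((c.mem_support_rotate_iff u hu).mp hx))) hux.ne'
  exact hc'.snd_ne_penultimate <|
    (lower _ (c'.getVert_mem_support 1) (Walk.adj_snd hc'.not_nil)).trans
      (lower _ (c'.getVert_mem_support _) (Walk.adj_penultimate hc'.not_nil).symm).symm

lemma induce_connected_of_exists_adj_lt [WellFoundedLT α] {H : SimpleGraph α} {S : Set α}
    {r : α} (hr : r ∈ S) (h : ∀ a ∈ S, a ≠ r → ∃ b ∈ S, H.Adj a b ∧ b < a) :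
    (H.induce S).Connected := by
  have reach : ∀ a (ha : a ∈ S), (H.induce S).Reachable ⟨a, ha⟩ ⟨r, hr⟩ := by
    intro a
    induction a using WellFoundedLT.induction with
    | _ a ih =>
      intro ha
      by_cases har : a = r
      · subst har
        rfl
      obtain ⟨b, hb, hab, hba⟩ := h a ha har
      exact (show (H.induce S).Adj ⟨a, ha⟩ ⟨b, hb⟩ from hab).reachable.trans (ih b hba hb)
  exact (connected_iff_exists_forall_reachable _).mpr
    ⟨⟨r, hr⟩, fun ⟨a, ha⟩ => (reach a ha).symm⟩

lemma parentGraph_connected [WellFoundedLT α] {r : α} (hp : ∀ a, a ≠ r → p a < a) :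
    (parentGraph p).Connected :=
  (induceUnivIso _).connected_iff.mp <| induce_connected_of_exists_adj_lt (Set.mem_univ r)
    fun a _ ha => ⟨p a, trivial, parentGraph_adj_parent (hp a ha), hp a ha⟩

end ParentGraph

end SimpleGraph

namespace TreeDecomp

variable {V : Type} {G : SimpleGraph V}

def ofParent {ι : Type} [LinearOrder ι] [WellFoundedLT ι] (ρ : ι) (p : ι → ι)
    (hp : ∀ j, j ≠ ρ → p j < j) (bag : ι → Finset V) (r : V → ι)
    (hr : ∀ v, v ∈ bag (r v))
    (hadj : ∀ ⦃u v⦄, G.Adj u v → ∃ j, u ∈ bag j ∧ v ∈ bag j)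
    (hdesc : ∀ v j, v ∈ bag j → j ≠ r v → p j < j ∧ v ∈ bag (p j)) :
    TreeDecomp G where
  ι := ι
  T := parentGraph p
  conn := parentGraph_connected hp
  acyclic := isAcyclic_parentGraph p
  bag := bag
  cover v := ⟨r v, hr v⟩
  edge_cover := hadj
  bag_conn v := induce_connected_of_exists_adj_lt (hr v) fun j hj hjv =>
    ⟨p j, (hdesc v j hj hjv).2, parentGraph_adj_parent (hdesc v j hj hjv).1,
      (hdesc v j hj hjv).1⟩

lemma exists_isHittingSet_bag [Finite V] (D : TreeDecomp G) {𝓑 : Set (Set V)}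
    (h𝓑 : IsBramble G 𝓑) : ∃ i, IsHittingSet 𝓑 (D.bag i : Set V) := by
  classical
  let bags : Set V → Set D.ι := fun A => ⋃ a : A, {i | (a : V) ∈ D.bag i}
  have hconn : ∀ A ∈ 𝓑, (D.T.induce (bags A)).Connected := fun A hA =>
    induce_iUnion_connected (h𝓑.1 A hA) (fun a => D.bag_conn a) fun a b hab => D.edge_cover hab
  have hmem : ∀ A, ∀ a ∈ A, ∀ i, a ∈ D.bag i → i ∈ bags A := fun A a ha i hi =>
    Set.mem_iUnion.mpr ⟨⟨a, ha⟩, hi⟩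
  have hpair : ∀ A ∈ 𝓑, ∀ B ∈ 𝓑, (bags A ∩ bags B).Nonempty := by
    intro A hA B hB
    rcases h𝓑.2 A hA B hB with ⟨z, hzA, hzB⟩ | ⟨a, ha, b, hb, hab⟩
    · obtain ⟨i, hi⟩ := D.cover z
      exact ⟨i, hmem A z hzA i hi, hmem B z hzB i hi⟩
    · obtain ⟨i, hai, hbi⟩ := D.edge_cover hab
      exact ⟨i, hmem A a ha i hai, hmem B b hb i hbi⟩
  let F := (Set.toFinite 𝓑).toFinset.image bags
  have hF : ∀ X ∈ F, ∃ A ∈ 𝓑, bags A = X := fun X hX => by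
    simpa [F] using hX
  obtain ⟨i, -, hi⟩ := D.acyclic.exists_mem_forall_mem F
    (fun X hX => by obtain ⟨A, hA, rfl⟩ := hF X hX; exact hconn A hA)
    (fun X hX Y hY => by
      obtain ⟨A, hA, rfl⟩ := hF X hX
      obtain ⟨B, hB, rfl⟩ := hF Y hY
      exact hpair A hA B hB)
    ((induceUnivIso D.T).connected_iff.mpr D.conn)
    (fun X hX => by
      obtain ⟨A, hA, rfl⟩ := hF X hX
      simpa using (hpair A hA A hA).mono Set.inter_subset_left)
  refine ⟨i, fun A hA => ?_⟩
  obtain ⟨a, ha⟩ := Set.mem_iUnion.mp (hi (bags A) (by simpa [F] using ⟨A, hA, rfl⟩))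
  exact ⟨a, a.2, ha⟩

lemma exists_subset_bag_of_isClique [Finite V] (D : TreeDecomp G) {W : Finset V}
    (hW : G.IsClique (W : Set V)) : ∃ i, W ⊆ D.bag i := by
  have h𝓑 : IsBramble G {s | ∃ v ∈ W, s = {v}} := by
    refine ⟨?_, ?_⟩
    · rintro _ ⟨v, -, rfl⟩
      rw [induce_singleton_eq_top]
      exact connected_top
    · rintro _ ⟨v, hv, rfl⟩ _ ⟨w, hw, rfl⟩
      by_cases hvw : v = w
      · exact Or.inl ⟨v, rfl, hvw⟩
      · exact Or.inr ⟨v, rfl, w, rfl, hW hv hw hvw⟩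
  obtain ⟨i, hi⟩ := D.exists_isHittingSet_bag h𝓑
  refine ⟨i, fun v hv => ?_⟩
  obtain ⟨_, rfl, hvi⟩ := hi {v} ⟨v, hv, rfl⟩
  exact hvi

end TreeDecomp

lemma treewidth_eq {V : Type} {G : SimpleGraph V} {c : ℕ} (D : TreeDecomp G)
    (hD : ∀ i, #(D.bag i) ≤ c + 1)
    (hlarge : ∀ D' : TreeDecomp G, ∃ i, c + 1 ≤ #(D'.bag i)) :
    treewidth G = c := by
  refine le_antisymm (Nat.sInf_le ⟨D, hD⟩) (le_csInf ⟨c, D, hD⟩ ?_)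
  rintro t ⟨D', hD'⟩
  obtain ⟨i, hi⟩ := hlarge D'
  have := hD' i
  omega

section EliminationOrder

variable {V : Type} {G : SimpleGraph V} {n k : ℕ} (e : V ≃ Fin n) {u v : V}

lemma isClique_of_lt {s : Set V} (h : ∀ a ∈ s, ∀ b ∈ s, e a < e b → G.Adj a b) :
    G.IsClique s := by
  intro a ha b hb hab
  rcases lt_or_gt_of_ne (e.injective.ne hab) with hlt | hlt
  · exact h a ha b hb hlt
  · exact (h b hb a ha hlt).symm

variable [Fintype V] [DecidableRel G.Adj]

lemma card_filter_val_lt {j : ℕ} (hj : j ≤ n) : #{u : V | (e u : ℕ) < j} = j := by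
  have : ({u : V | (e u : ℕ) < j} : Finset V) =
      ({i : Fin n | (i : ℕ) < j} : Finset (Fin n)).map e.symm.toEmbedding := by
    ext u
    simp
  rw [this, card_map, Fin.card_filter_val_lt, min_eq_right hj]

def earlierNeighbors (G : SimpleGraph V) [DecidableRel G.Adj] (e : V ≃ Fin n) (v : V) :
    Finset V :=
  {u | e u < e v ∧ G.Adj u v}

@[simp] lemma mem_earlierNeighbors : u ∈ earlierNeighbors G e v ↔ e u < e v ∧ G.Adj u v := by
  simp [earlierNeighbors]

lemma mem_earlierNeighbors_of_adj (h : G.Adj u v) (hle : e u ≤ e v) :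
    u ∈ earlierNeighbors G e v :=
  (mem_earlierNeighbors e).mpr ⟨lt_of_le_of_ne hle (e.injective.ne h.ne), h⟩

/-- A clique minus its last vertex lies in the earlier neighbourhood of that vertex. -/
lemma card_le_of_isClique (hcard : ∀ v, #(earlierNeighbors G e v) ≤ k) {W : Finset V}
    (hW : G.IsClique (W : Set V)) : #W ≤ k + 1 := by
  classical
  obtain rfl | hne := W.eq_empty_or_nonempty
  · simp
  obtain ⟨v, hv, hmax⟩ := W.exists_max_image e hne
  have hsub : W.erase v ⊆ earlierNeighbors G e v := fun u hu =>
    mem_earlierNeighbors_of_adj e (hW (mem_erase.mp hu).2 hv (mem_erase.mp hu).1)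
      (hmax u (mem_erase.mp hu).2)
  have := card_le_card hsub
  have := card_erase_add_one hv
  have := hcard v
  omega

/-- The last vertex of an induced 4-cycle has two non-adjacent earlier neighbours. -/
lemma not_hasInducedC4 (hcl : ∀ v, G.IsClique (earlierNeighbors G e v : Set V)) :
    ¬HasInducedC4 G := by
  classical
  have key : ∀ a b d, G.Adj a b → G.Adj d a → b ≠ d → e b ≤ e a → e d ≤ e a →
      G.Adj b d :=
    fun a b d hab hda hbd hb hd => hcl a (mem_earlierNeighbors_of_adj e hab.symm hb)
      (mem_earlierNeighbors_of_adj e hda hd) hbd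
  rintro ⟨a, b, c, d, hac, hbd, hab, hbc, hcd, hda, hnac, hnbd⟩
  obtain ⟨m, hm, hmax⟩ := ({a, b, c, d} : Finset V).exists_max_image e ⟨a, by simp⟩
  simp only [mem_insert, mem_singleton, forall_eq_or_imp, forall_eq] at hm hmax
  rcases hm with rfl | rfl | rfl | rfl
  · exact hnbd (key _ b d hab hda hbd hmax.2.1 hmax.2.2.2)
  · exact hnac (key _ a c hab.symm hbc.symm hac hmax.1 hmax.2.2.1)
  · exact hnbd (key _ b d hbc.symm hcd.symm hbd hmax.2.1 hmax.2.2.2)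
  · exact hnac (key _ a c hda hcd hac hmax.1 hmax.2.2.1)

/-- Bags: each vertex with its earlier neighbourhood, hung below the bag of the latest vertex of
that neighbourhood. -/
lemma exists_treeDecomp_of_earlierNeighbors [Nonempty V]
    (hcl : ∀ v, G.IsClique (earlierNeighbors G e v : Set V))
    (hcard : ∀ v, #(earlierNeighbors G e v) ≤ k) :
    ∃ D : TreeDecomp G, ∀ i, #(D.bag i) ≤ k + 1 := by
  classical
  have : NeZero n := ⟨(Fin.pos (e (Classical.arbitrary V))).ne'⟩
  let N := fun j : Fin n => earlierNeighbors G e (e.symm j)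
  let p : Fin n → Fin n := fun j =>
    if h : (N j).Nonempty then ((N j).image e).max' (h.image e) else 0
  have hpN : ∀ j, (N j).Nonempty → ∃ z ∈ N j, e z = p j ∧ ∀ u ∈ N j, e u ≤ p j := by
    intro j h
    obtain ⟨z, hz, hzp⟩ := mem_image.mp (((N j).image e).max'_mem (h.image e))
    refine ⟨z, hz, by simp [p, h, hzp], fun u hu => ?_⟩
    simpa [p, h] using ((N j).image e).le_max' (e u) (mem_image_of_mem e hu)
  have hplt : ∀ j, (N j).Nonempty → p j < j := by
    intro j h
    obtain ⟨z, hz, hzp, -⟩ := hpN j h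
    simpa [N, hzp] using ((mem_earlierNeighbors e).mp hz).1
  refine ⟨.ofParent 0 p (fun j hj => ?_) (fun j => insert (e.symm j) (N j)) e (fun v => by simp)
    (fun u v huv => ?_) (fun v j hv hjv => ?_),
    fun j => (card_insert_le _ _).trans (Nat.add_le_add_right (hcard _) 1)⟩
  · by_cases h : (N j).Nonempty
    · exact hplt j h
    · simpa [p, h, pos_iff_ne_zero] using hj
  · rcases le_total (e u) (e v) with h | h
    · exact ⟨e v, by simp [N, mem_earlierNeighbors_of_adj e huv h]⟩
    · exact ⟨e u, by simp [N, mem_earlierNeighbors_of_adj e huv.symm h]⟩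
  · have hvN : v ∈ N j := by
      rcases mem_insert.mp hv with rfl | hv
      · simp at hjv
      · exact hv
    obtain ⟨z, hz, hzp, hmax⟩ := hpN j ⟨v, hvN⟩
    refine ⟨hplt j ⟨v, hvN⟩, ?_⟩
    show v ∈ insert (e.symm (p j)) (earlierNeighbors G e (e.symm (p j)))
    rw [← hzp, e.symm_apply_apply]
    by_cases hvz : v = z
    · exact hvz ▸ mem_insert_self v _
    · exact mem_insert_of_mem
        (mem_earlierNeighbors_of_adj e (hcl _ hvN hz hvz) (hzp ▸ hmax v hvN))

end EliminationOrder

section Intervals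

variable {V : Type} [Fintype V]

/-- The path decomposition whose `i`-th bag holds the vertices `v` with `i ∈ [lo v, hi v]`. -/
lemma exists_treeDecomp_of_intervals {H : SimpleGraph V} (m c : ℕ) (lo hi : V → ℕ)
    (hle : ∀ v, lo v ≤ hi v) (hm : ∀ v, hi v ≤ m)
    (hadj : ∀ u v, H.Adj u v → lo u ≤ hi v)
    (hcard : ∀ i, #{v | lo v ≤ i ∧ i ≤ hi v} ≤ c + 1) :
    ∃ D : TreeDecomp H, ∀ i, #(D.bag i) ≤ c + 1 := by
  refine ⟨.ofParent (ι := Fin (m + 1)) 0 (fun j => ⟨j - 1, by omega⟩) (fun j hj => ?_)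
    (fun j => {v | lo v ≤ j ∧ j ≤ hi v}) (fun v => ⟨lo v, by linarith [hle v, hm v]⟩)
    (fun v => by simp [hle]) (fun u v huv => ?_) (fun v j hv hjv => ?_),
    fun (j : Fin (m + 1)) => hcard j⟩
  · have : (j : ℕ) ≠ 0 := fun h => hj (Fin.ext h)
    rw [Fin.lt_def]
    dsimp only
    omega
  · have := hadj u v huv
    have := hadj v u huv.symm
    have := hle u
    have := hle v
    have := hm u
    have := hm v
    refine ⟨⟨max (lo u) (lo v), by omega⟩, ?_⟩
    simp only [mem_filter, mem_univ, true_and]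
    omega
  · have : (j : ℕ) ≠ lo v := fun h => hjv (Fin.ext h)
    simp only [mem_filter, mem_univ, true_and, Fin.lt_def] at hv ⊢
    omega

end Intervals

section Complement

variable {V : Type} {G : SimpleGraph V}

def AttachDistinctFacets (G : SimpleGraph V) (B : Finset V) (w u : V) : Prop :=
  w ∉ B ∧ u ∉ B ∧ ∃ d ∈ B, ∃ x ∈ B, d ≠ x ∧
    (∀ z ∈ B, z ≠ d → G.Adj w z) ∧ (∀ z ∈ B, z ≠ x → G.Adj u z)

variable {B : Finset V} {w u : V}

lemma AttachDistinctFacets.ne (h : AttachDistinctFacets G B w u) (hB : G.IsClique (B : Set V))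
    (hω : ∀ W : Finset V, G.IsClique (W : Set V) → #W ≤ #B) : w ≠ u := by
  classical
  rintro rfl
  obtain ⟨hw, -, d, -, x, -, hdx, hwd, hwx⟩ := h
  have hcl : G.IsClique (insert w B : Finset V) := by
    rw [coe_insert, isClique_insert]
    refine ⟨hB, fun z hz _ => ?_⟩
    by_cases hzd : z = d
    · exact hwx z hz (hzd ▸ hdx)
    · exact hwd z hz hzd
  have := hω _ hcl
  rw [card_insert_of_notMem hw] at this
  omega

lemma AttachDistinctFacets.card_add_two_le [Fintype V] (h : AttachDistinctFacets G B w u)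
    (hwu : w ≠ u) :
    #B + 2 ≤ Fintype.card V := by
  classical
  have := card_le_univ (insert w (insert u B))
  rwa [card_insert_of_notMem (by simp [hwu, h.1]), card_insert_of_notMem h.2.1] at this

section FacetLayout

variable [Fintype V] [DecidableEq V] (B : Finset V) (d x w u : V)

/-- Intervals for the path decomposition of `Gᶜ`: the vertices of `B` are points (`d` at `0`,
`x` at `2`, the others from `3` on), `w` spans `[0, 1]`, `u` spans `[1, 2]` and every other
vertex spans everything. -/
noncomputable def facetPos (v : V) : ℕ :=
  if v = d then 0 else if v = x then 2 else Fintype.equivFin V v + 3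

noncomputable def facetLo (v : V) : ℕ :=
  if v ∈ B then facetPos d x v else if v = u then 1 else 0

noncomputable def facetHi (v : V) : ℕ :=
  if v ∈ B then facetPos d x v else if v = w then 1 else if v = u then 2 else Fintype.card V + 2

lemma facetPos_injective : Function.Injective (facetPos d x) := by
  intro a b hab
  simp only [facetPos] at hab
  split_ifs at hab <;> first | subst_vars; rfl | omega |
    exact (Fintype.equivFin V).injective (Fin.ext (by omega))

lemma facetLo_le_facetHi (v : V) : facetLo B d x u v ≤ facetHi B d x w u v := by
  simp only [facetLo, facetHi]
  split_ifs <;> simp_all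

lemma facetHi_le (v : V) : facetHi B d x w u v ≤ Fintype.card V + 2 := by
  have := (Fintype.equivFin V v).2
  simp only [facetHi, facetPos]
  split_ifs <;> omega

variable {B d x w u}

/-- Intervals miss each other only for pairs adjacent in `G`: two vertices of `B`, or a vertex of
`B` and one of `w, u` that is adjacent to it. -/
lemma facetLo_le_facetHi_of_adj (hB : G.IsClique (B : Set V)) (hd : d ∈ B) (hdx : d ≠ x)
    (hwB : ∀ z ∈ B, z ≠ d → G.Adj w z) (huB : ∀ z ∈ B, z ≠ x → G.Adj u z) {a b : V}
    (hab : Gᶜ.Adj a b) : facetLo B d x u a ≤ facetHi B d x w u b := by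
  rw [compl_adj] at hab
  by_contra hlt
  apply hab.2
  have := (Fintype.equivFin V a).2
  simp only [facetLo, facetHi, facetPos] at hlt
  split_ifs at hlt
  all_goals subst_vars
  all_goals first
    | omega
    | exact hB ‹_› ‹_› hab.1
    | exact huB _ ‹_› ‹_›
    | exact (hwB _ ‹_› ‹_›).symm
    | exact (huB _ ‹_› ‹_›).symm

lemma card_facetBag_inter_le_two (hw : w ∉ B) (hu : u ∉ B) (hwu : w ≠ u) (i : ℕ) :
    #(({v | facetLo B d x u v ≤ i ∧ i ≤ facetHi B d x w u v} : Finset V) ∩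
      insert w (insert u B)) ≤ 2 := by
  have hB1 : #(B.filter (facetPos d x · = i)) ≤ 1 := card_le_one.mpr fun a ha b hb =>
    facetPos_injective d x (by simp only [mem_filter] at ha hb; omega)
  by_cases hi1 : i = 1
  · refine (card_le_card (t := {w, u}) fun v hv => ?_).trans card_le_two
    obtain ⟨hv, hvW⟩ := mem_inter.mp hv
    simp only [mem_filter, mem_univ, true_and] at hv
    rcases mem_insert.mp hvW with rfl | hvW
    · exact mem_insert_self _ _
    rcases mem_insert.mp hvW with rfl | hvB
    · exact mem_insert_of_mem (mem_singleton_self _)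
    simp only [facetLo, facetHi, facetPos, hvB, if_true] at hv
    split_ifs at hv <;> omega
  · refine (card_le_card (t := insert (if i = 0 then w else u) (B.filter (facetPos d x · = i)))
      fun v hv => ?_).trans ((card_insert_le _ _).trans (by omega))
    obtain ⟨hv, hvW⟩ := mem_inter.mp hv
    simp only [mem_filter, mem_univ, true_and] at hv
    rcases mem_insert.mp hvW with rfl | hvW
    · simp only [facetLo, facetHi, hw, hwu, if_false, if_true] at hv
      simp [show i = 0 by omega]
    rcases mem_insert.mp hvW with rfl | hvB
    · simp only [facetLo, facetHi, hu, hwu.symm, if_false, if_true] at hv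
      simp [show i ≠ 0 by omega]
    simp only [facetLo, facetHi, hvB, if_true] at hv
    exact mem_insert_of_mem (mem_filter.mpr ⟨hvB, by omega⟩)

lemma card_facetBag_add_card_le (hw : w ∉ B) (hu : u ∉ B) (hwu : w ≠ u) (i : ℕ) :
    #{v | facetLo B d x u v ≤ i ∧ i ≤ facetHi B d x w u v} + #B ≤ Fintype.card V := by
  have hin := card_facetBag_inter_le_two (d := d) (x := x) hw hu hwu i
  set bag : Finset V := {v | facetLo B d x u v ≤ i ∧ i ≤ facetHi B d x w u v}
  set W := insert w (insert u B)
  have hW : #W = #B + 2 := by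
    rw [card_insert_of_notMem (by simp [hwu, hw]), card_insert_of_notMem hu]
  have hout : #(bag \ W) ≤ Fintype.card V - #W := by
    rw [← card_compl]
    exact card_le_card fun v hv => mem_compl.mpr (mem_sdiff.mp hv).2
  have := card_inter_add_card_sdiff bag W
  have := card_le_univ W
  omega

end FacetLayout

lemma exists_treeDecomp_compl_of_attach [Fintype V] (hB : G.IsClique (B : Set V))
    (h : AttachDistinctFacets G B w u) (hwu : w ≠ u) :
    ∃ D : TreeDecomp Gᶜ, ∀ i, #(D.bag i) + #B ≤ Fintype.card V := by
  classical
  have hcard := h.card_add_two_le hwu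
  obtain ⟨hw, hu, d, hd, x, -, hdx, hwB, huB⟩ := h
  obtain ⟨D, hD⟩ := exists_treeDecomp_of_intervals (Fintype.card V + 2)
    (Fintype.card V - #B - 1)
    (facetLo B d x u) (facetHi B d x w u) (facetLo_le_facetHi B d x w u) (facetHi_le B d x w u)
    (fun _ _ => facetLo_le_facetHi_of_adj hB hd hdx hwB huB)
    fun i => by have := card_facetBag_add_card_le (d := d) (x := x) hw hu hwu i; omega
  exact ⟨D, fun i => by have := hD i; omega⟩

end Complement

section ComplementLowerBound

variable {V : Type} {G : SimpleGraph V}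

/-- Two disjoint non-edges of `G` joined by no non-edge would span an induced 4-cycle. -/
lemma isBramble_compl_edges (hC4 : ¬HasInducedC4 G) :
    IsBramble Gᶜ {s | ∃ a b, Gᶜ.Adj a b ∧ s = {a, b}} := by
  refine ⟨?_, ?_⟩
  · rintro _ ⟨a, b, hab, rfl⟩
    exact induce_pair_connected_of_adj hab
  · rintro _ ⟨a, b, hab, rfl⟩ _ ⟨c, d, hcd, rfl⟩
    by_contra hT
    simp only [Touch, not_or, Set.not_nonempty_iff_eq_empty, not_exists, not_and] at hT
    have cross : ∀ y ∈ ({a, b} : Set V), ∀ z ∈ ({c, d} : Set V), G.Adj y z := by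
      intro y hy z hz
      have hyz : y ≠ z := by
        rintro rfl
        exact (Set.eq_empty_iff_forall_notMem.mp hT.1 y) ⟨hy, hz⟩
      by_contra hn
      exact hT.2 y hy z hz ((compl_adj G y z).mpr ⟨hyz, hn⟩)
    rw [compl_adj] at hab hcd
    exact hC4 ⟨a, c, b, d, hab.1, hcd.1, cross a (by simp) c (by simp),
      (cross b (by simp) c (by simp)).symm, cross b (by simp) d (by simp),
      (cross a (by simp) d (by simp)).symm, hab.2, hcd.2⟩

/-- A bag meeting every non-edge of `G` leaves out a clique of `G`. -/
lemma TreeDecomp.exists_card_le_card_bag_add [Fintype V] {c : ℕ} (hC4 : ¬HasInducedC4 G)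
    (hω : ∀ W : Finset V, G.IsClique (W : Set V) → #W ≤ c) (D : TreeDecomp Gᶜ) :
    ∃ i, Fintype.card V ≤ #(D.bag i) + c := by
  classical
  obtain ⟨i, hi⟩ := D.exists_isHittingSet_bag (isBramble_compl_edges hC4)
  refine ⟨i, ?_⟩
  have hcl : G.IsClique ((D.bag i)ᶜ : Finset V) := by
    intro a ha b hb hab
    by_contra hn
    obtain ⟨z, hz, hzi⟩ := hi {a, b} ⟨a, b, (compl_adj G a b).mpr ⟨hab, hn⟩, rfl⟩
    rcases hz with rfl | rfl
    · exact (mem_compl.mp ha) hzi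
    · exact (mem_compl.mp hb) hzi
  have := hω _ hcl
  rw [card_compl] at this
  have := card_le_univ (D.bag i)
  omega

end ComplementLowerBound

section SplitGraph

variable {V : Type} {G : SimpleGraph V} {E : Finset V}

/-- `K` has exactly one vertex `y ∉ E` and misses exactly one `x ∈ E`; then `B = E ∪ {y}`
works, with `w` any vertex of `X \ E` other than `y`. -/
lemma exists_attachDistinctFacets [DecidableEq V] {X K : Finset V} {v : V}
    (hX : ∀ a ∈ X, ∀ b ∈ X, (G.Adj a b ↔ a ≠ b ∧ (a ∈ E ∨ b ∈ E)))
    (hEX : E ⊆ X) (hcard : #E + 2 ≤ #X) (hvX : v ∉ X)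
    (hK : G.IsNClique #E K) (hKX : K ⊆ X) (hvK : ∀ z ∈ K, G.Adj v z) (hKE : K ≠ E) :
    ∃ B w, G.IsNClique (#E + 1) B ∧ AttachDistinctFacets G B w v := by
  obtain ⟨y, hyK, hyE⟩ : ∃ y ∈ K, y ∉ E := by
    by_contra! h
    exact hKE (eq_of_subset_of_card_le h hK.card_eq.ge)
  obtain ⟨x, hxE, hxK⟩ : ∃ x ∈ E, x ∉ K := by
    by_contra! h
    exact hKE (eq_of_subset_of_card_le h hK.card_eq.le).symm
  have hKy : K.erase y ⊆ E.erase x := fun z hz => by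
    obtain ⟨hzy, hzK⟩ := mem_erase.mp hz
    refine mem_erase.mpr ⟨fun h => hxK (h ▸ hzK), ?_⟩
    exact (((hX z (hKX hzK) y (hKX hyK)).mp (hK.isClique hzK hyK hzy)).2.resolve_right hyE)
  have hEx : E.erase x ⊆ K := fun z hz => by
    have := eq_of_subset_of_card_le hKy (by rw [card_erase_of_mem hyK, card_erase_of_mem hxE,
      hK.card_eq])
    exact mem_of_mem_erase (this ▸ hz)
  obtain ⟨w, hw⟩ : ((X \ E).erase y).Nonempty := by
    rw [← card_pos, card_erase_of_mem (mem_sdiff.mpr ⟨hKX hyK, hyE⟩),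
      card_sdiff_of_subset hEX]
    omega
  obtain ⟨hwy, hwX, hwE⟩ : w ≠ y ∧ w ∈ X ∧ w ∉ E := by simpa using hw
  have hEadj : ∀ a ∈ X, a ∉ E → ∀ z ∈ E, G.Adj a z := fun a ha haE z hz =>
    (hX a ha z (hEX hz)).mpr ⟨fun h => haE (h ▸ hz), Or.inr hz⟩
  refine ⟨insert y E, w, ⟨?_, card_insert_of_notMem hyE⟩, by simp [hwy, hwE],
    fun h => hvX (by rcases mem_insert.mp h with rfl | h; exacts [hKX hyK, hEX h]),
    y, mem_insert_self y E, x, mem_insert_of_mem hxE, fun h => hyE (h ▸ hxE), ?_, ?_⟩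
  · rw [coe_insert, isClique_insert]
    exact ⟨fun a ha b hb hab => (hX a (hEX ha) b (hEX hb)).mpr ⟨hab, Or.inl ha⟩,
      fun z hz _ => hEadj y (hKX hyK) hyE z hz⟩
  · intro z hz hzy
    exact hEadj w hwX hwE z ((mem_insert.mp hz).resolve_left hzy)
  · intro z hz hzx
    rcases mem_insert.mp hz with rfl | hz
    · exact hvK z hyK
    · exact hvK z (hEx (mem_erase.mpr ⟨hzx, hz⟩))

lemma adj_iff_of_lt {n : ℕ} (e : V ≃ Fin n) {X : Set V}
    (h : ∀ a ∈ X, ∀ b ∈ X, e a < e b → (G.Adj a b ↔ a ∈ E ∨ b ∈ E)) :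
    ∀ a ∈ X, ∀ b ∈ X, (G.Adj a b ↔ a ≠ b ∧ (a ∈ E ∨ b ∈ E)) := by
  intro a ha b hb
  rcases lt_trichotomy (e a) (e b) with hab | hab | hab
  · rw [h a ha b hb hab, and_iff_right (e.injective.ne_iff.mp hab.ne)]
  · obtain rfl := e.injective hab
    simp
  · rw [adj_comm, h b hb a ha hab, and_iff_right (e.injective.ne_iff.mp hab.ne'), or_comm]

lemma exists_equiv_fin_val_lt_iff [Fintype V] [DecidableEq V] (s : Finset V) :
    ∃ φ : V ≃ Fin (Fintype.card V), ∀ v, (φ v : ℕ) < #s ↔ v ∈ s := by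
  have h₁ : Fintype.card s = #s := Fintype.card_coe s
  have h₂ : Fintype.card {v // v ∉ s} = Fintype.card V - #s := by
    rw [Fintype.card_subtype_compl, Fintype.card_coe]
  refine ⟨(Equiv.sumCompl (· ∈ s)).symm.trans
    (((Fintype.equivFinOfCardEq h₁).sumCongr (Fintype.equivFinOfCardEq h₂)).trans
      (finSumFinEquiv.trans (finCongr (by have := card_le_univ s; omega)))), fun v => ?_⟩
  by_cases hv : v ∈ s
  · simp [Equiv.sumCompl_symm_apply_of_pos hv, hv]
  · simp [Equiv.sumCompl_symm_apply_of_neg hv, hv]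

lemma nonempty_iso_qGraph [Fintype V] [DecidableEq V]
    (hadj : ∀ a b, G.Adj a b ↔ a ≠ b ∧ (a ∈ E ∨ b ∈ E)) :
    Nonempty (G ≃g QGraph (Fintype.card V) #E) := by
  obtain ⟨φ, hφ⟩ := exists_equiv_fin_val_lt_iff E
  exact ⟨{ toEquiv := φ, map_rel_iff' := by simp [QGraph, hadj, hφ] }⟩

end SplitGraph

section KTree

variable {V : Type} [Fintype V] {G : SimpleGraph V} [DecidableRel G.Adj] {n k : ℕ}
  {e : V ≃ Fin n}

/-- `IsKTree`, phrased through earlier neighbourhoods. -/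
structure IsKTreeOrder (k : ℕ) (G : SimpleGraph V) [DecidableRel G.Adj] (e : V ≃ Fin n) :
    Prop where
  succ_le : k + 1 ≤ n
  adj_of_lt : ∀ u v, e u < e v → (e v : ℕ) ≤ k → G.Adj u v
  isNClique : ∀ v, k < (e v : ℕ) → G.IsNClique k (earlierNeighbors G e v)

lemma IsKTree.exists_isKTreeOrder (h : IsKTree k G) :
    ∃ e : V ≃ Fin (Fintype.card V), IsKTreeOrder k G e := by
  obtain ⟨n, e, hkn, hbase, hstep⟩ := h
  obtain rfl : Fintype.card V = n := by simpa using Fintype.card_congr e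
  refine ⟨e, hkn, fun u v huv hv => ?_, fun v hv => ?_⟩
  · have := hbase (e u) (e v) huv (by omega)
    rwa [e.symm_apply_apply, e.symm_apply_apply] at this
  obtain ⟨C, hC, hCe, hCadj⟩ := hstep (e v) hv
  convert hC
  ext u
  have hCadj' : e u < e v → (G.Adj u v ↔ u ∈ C) := by simpa using hCadj (e u)
  rw [mem_earlierNeighbors]
  exact ⟨fun ⟨hlt, hadj⟩ => (hCadj' hlt).mp hadj,
    fun hu => ⟨hCe u hu, (hCadj' (hCe u hu)).mpr hu⟩⟩

namespace IsKTreeOrder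

variable (he : IsKTreeOrder k G e)
include he

lemma isClique_earlierNeighbors (v : V) : G.IsClique (earlierNeighbors G e v : Set V) := by
  by_cases hv : k < (e v : ℕ)
  · exact (he.isNClique v hv).isClique
  · refine isClique_of_lt e fun a ha b hb hab => he.adj_of_lt a b hab ?_
    have := ((mem_earlierNeighbors e).mp hb).1
    rw [Fin.lt_def] at this
    omega

lemma card_earlierNeighbors_le (v : V) : #(earlierNeighbors G e v) ≤ k := by
  by_cases hv : k < (e v : ℕ)
  · exact (he.isNClique v hv).card_eq.le
  · calc #(earlierNeighbors G e v) ≤ #{u : V | (e u : ℕ) < e v} :=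
          card_le_card fun u hu =>
            mem_filter.mpr ⟨mem_univ u, Fin.lt_def.mp ((mem_earlierNeighbors e).mp hu).1⟩
      _ = e v := card_filter_val_lt e (e v).2.le
      _ ≤ k := by omega

lemma isNClique_initial : G.IsNClique (k + 1) {u : V | (e u : ℕ) < k + 1} := by
  refine ⟨isClique_of_lt e fun a _ b hb hab => he.adj_of_lt a b hab ?_,
    card_filter_val_lt e he.succ_le⟩
  simp only [coe_filter, mem_univ, true_and, Set.mem_ofPred_eq] at hb
  omega

lemma mem_or_mem_of_le {E : Finset V} (hE : ∀ u ∈ E, (e u : ℕ) ≤ k) (hEk : #E = k) {a b : V}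
    (ha : (e a : ℕ) ≤ k) (hb : (e b : ℕ) ≤ k) (hab : a ≠ b) : a ∈ E ∨ b ∈ E := by
  classical
  by_contra! h
  have hsub : insert a (insert b E) ⊆ ({u : V | (e u : ℕ) < k + 1} : Finset V) := by
    intro u hu
    simp only [mem_insert, mem_filter, mem_univ, true_and] at hu ⊢
    rcases hu with rfl | rfl | hu
    · omega
    · omega
    · have := hE u hu
      omega
  have := card_le_card hsub
  rw [card_filter_val_lt e he.succ_le, card_insert_of_notMem (by simp [hab, h.1]),
    card_insert_of_notMem h.2, hEk] at this
  omega

/-- The core: the attachment clique of vertex `k + 1`, or any `k` of the initial vertices if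
there is no such vertex. -/
lemma exists_core : ∃ E : Finset V, (∀ u ∈ E, (e u : ℕ) ≤ k) ∧ #E = k ∧
    ∀ v, (e v : ℕ) = k + 1 → earlierNeighbors G e v = E := by
  by_cases h : ∃ v₁, (e v₁ : ℕ) = k + 1
  · obtain ⟨v₁, hv₁⟩ := h
    refine ⟨earlierNeighbors G e v₁, fun u hu => ?_, (he.isNClique v₁ (by omega)).card_eq,
      fun v hv => by rw [e.injective (Fin.ext (hv.trans hv₁.symm))]⟩
    have := ((mem_earlierNeighbors e).mp hu).1
    rw [Fin.lt_def] at this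
    omega
  · obtain ⟨E, hE, hEk⟩ := exists_subset_card_eq (s := {u : V | (e u : ℕ) < k + 1}) (n := k)
      (by rw [card_filter_val_lt e he.succ_le]; omega)
    refine ⟨E, fun u hu => ?_, hEk, fun v hv => (h ⟨v, hv⟩).elim⟩
    have := hE hu
    simp only [mem_filter, mem_univ, true_and] at this
    omega

/-- Induction along `e`: while every vertex attaches to the core `E`, the graph built so far is
`Q` with clique `E`, and the first vertex attaching elsewhere yields `AttachDistinctFacets`. -/
lemma exists_attach_or_adj_iff :
    (∃ B w u, G.IsNClique (k + 1) B ∧ AttachDistinctFacets G B w u) ∨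
      ∃ E : Finset V, #E = k ∧ ∀ a b, G.Adj a b ↔ a ≠ b ∧ (a ∈ E ∨ b ∈ E) := by
  classical
  obtain ⟨E, hE, hEk, hfirst⟩ := he.exists_core
  by_cases hatt : ∃ B w u, G.IsNClique (k + 1) B ∧ AttachDistinctFacets G B w u
  · exact Or.inl hatt
  refine Or.inr ⟨E, hEk, ?_⟩
  have key : ∀ j, ∀ v, (e v : ℕ) = j → ∀ u, e u < e v →
      (G.Adj u v ↔ u ∈ E ∨ v ∈ E) := by
    intro j
    induction j using Nat.strong_induction_on with
    | _ j ih =>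
    intro v hvj u huv
    by_cases hv : (e v : ℕ) ≤ k
    · exact iff_of_true (he.adj_of_lt u v huv hv) (he.mem_or_mem_of_le hE hEk
        (by rw [Fin.lt_def] at huv; omega) hv (ne_of_apply_ne e huv.ne))
    have hvE : v ∉ E := fun h => hv (hE v h)
    suffices hN : earlierNeighbors G e v = E by
      rw [← hN, mem_earlierNeighbors, hN]
      simp [huv, hvE]
    rcases (show (e v : ℕ) = k + 1 ∨ k + 2 ≤ e v by omega) with h | h
    · exact hfirst v h
    by_contra hne
    let X : Finset V := {u | (e u : ℕ) < e v}
    have hX : ∀ a ∈ X, ∀ b ∈ X, (G.Adj a b ↔ a ≠ b ∧ (a ∈ E ∨ b ∈ E)) :=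
      adj_iff_of_lt (X := (X : Set V)) e fun a _ b hb hab =>
        ih (e b) (hvj ▸ (mem_filter.mp hb).2) b rfl a hab
    obtain ⟨B, w, hB, hBw⟩ := exists_attachDistinctFacets hX
      (fun u hu => mem_filter.mpr ⟨mem_univ u, by have := hE u hu; omega⟩)
      (by rw [hEk, card_filter_val_lt e (e v).2.le]; omega) (by simp [X])
      (hEk ▸ he.isNClique v (by omega))
      (fun u hu =>
        mem_filter.mpr ⟨mem_univ u, Fin.lt_def.mp ((mem_earlierNeighbors e).mp hu).1⟩)
      (fun z hz => ((mem_earlierNeighbors e).mp hz).2.symm) hne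
    exact hatt ⟨B, w, v, hEk ▸ hB, hBw⟩
  exact fun a b =>
    adj_iff_of_lt (X := Set.univ) e (fun a _ b _ hab => key _ b rfl a hab) a trivial b trivial

end IsKTreeOrder

end KTree

theorem kTree_nordhaus_gaddum_exact {V : Type} [Fintype V] (k : ℕ) (G : SimpleGraph V)
    (h : IsKTree k G) (hiso : IsEmpty (G ≃g QGraph (Fintype.card V) k)) :
    treewidth G + treewidth Gᶜ = Fintype.card V - 2 := by
  classical
  obtain ⟨e, he⟩ := h.exists_isKTreeOrder
  have hω : ∀ W : Finset V, G.IsClique (W : Set V) → #W ≤ k + 1 :=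
    fun W => card_le_of_isClique e he.card_earlierNeighbors_le
  obtain ⟨B, w, u, hB, hatt⟩ := he.exists_attach_or_adj_iff.resolve_right <| by
    rintro ⟨E, rfl, hadj⟩
    exact hiso.false (nonempty_iso_qGraph hadj).some
  have hwu : w ≠ u := hatt.ne hB.isClique (hB.card_eq ▸ hω)
  have hn := hatt.card_add_two_le hwu
  rw [hB.card_eq] at hn
  have : Nonempty V := ⟨w⟩
  obtain ⟨D, hD⟩ := exists_treeDecomp_of_earlierNeighbors e he.isClique_earlierNeighbors
    he.card_earlierNeighbors_le
  obtain ⟨Dc, hDc⟩ := exists_treeDecomp_compl_of_attach hB.isClique hatt hwu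
  have htw : treewidth G = k := treewidth_eq D hD fun D' => by
    obtain ⟨i, hi⟩ := D'.exists_subset_bag_of_isClique he.isNClique_initial.isClique
    exact ⟨i, he.isNClique_initial.card_eq ▸ card_le_card hi⟩
  have htwc : treewidth Gᶜ = Fintype.card V - k - 2 :=
    treewidth_eq Dc (fun i => by have := hDc i; rw [hB.card_eq] at this; omega) fun D' => by
      obtain ⟨i, hi⟩ := D'.exists_card_le_card_bag_add (not_hasInducedC4 e
        he.isClique_earlierNeighbors) hω
      exact ⟨i, by omega⟩
  omega
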